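/- arXiv:1701.00206 — 8 statements merged into one kernel-verified Lean document; each statement's English description precedes it below -/
import Mathlib

section
/- The E-closure operator is finitely additive: for any sets 𝒯₀ and 𝒯₁ of complete theories, Cl_E(𝒯₀ ∪ 𝒯₁) = Cl_E(𝒯₀) ∪ Cl_E(𝒯₁). -/
open Set

variable {Sentence : Type*}

/-- The set `𝒯_φ` of theories in `𝒯` containing the sentence `φ`. -/
def setAt (𝒯 : Set (Set Sentence)) (φ : Sentence) : Set (Set Sentence) :=
  {T ∈ 𝒯 | φ ∈ T}

/-- The E-closure of a set of theories, relative to the predicate `isTh` of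
being a theory: `𝒯` together with all theories `T` such that every sentence
of `T` belongs to infinitely many members of `𝒯`. -/
def ClE (isTh : Set Sentence → Prop) (𝒯 : Set (Set Sentence)) : Set (Set Sentence) :=
  𝒯 ∪ {T | isTh T ∧ ∀ φ ∈ T, (setAt 𝒯 φ).Infinite}

lemma setAt_union (𝒯₀ 𝒯₁ : Set (Set Sentence)) (φ : Sentence) :
    setAt (𝒯₀ ∪ 𝒯₁) φ = setAt 𝒯₀ φ ∪ setAt 𝒯₁ φ := by
  ext T; simp only [setAt, mem_union, mem_setOf_eq, mem_sep_iff]; tauto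

/-- Theorem 1.2: the E-closure operator is finitely additive. -/
theorem ClE_union
    (conj : Sentence → Sentence → Sentence)
    (isTh : Set Sentence → Prop)
    (hne : ∀ T, isTh T → T.Nonempty)
    (hconj : ∀ T, isTh T → ∀ φ ψ : Sentence, conj φ ψ ∈ T ↔ φ ∈ T ∧ ψ ∈ T)
    (𝒯₀ 𝒯₁ : Set (Set Sentence))
    (h𝒯₀ : ∀ T ∈ 𝒯₀, isTh T) (h𝒯₁ : ∀ T ∈ 𝒯₁, isTh T) :
    ClE isTh (𝒯₀ ∪ 𝒯₁) = ClE isTh 𝒯₀ ∪ ClE isTh 𝒯₁ := by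
  ext T
  constructor
  · rintro (hT | ⟨hTh, hall⟩)
    · rcases hT with h | h
      · exact Or.inl (Or.inl h)
      · exact Or.inr (Or.inl h)
    · -- either all φ have setAt 𝒯₀ φ infinite, or all have setAt 𝒯₁ φ infinite
      by_cases h0 : ∀ φ ∈ T, (setAt 𝒯₀ φ).Infinite
      · exact Or.inl (Or.inr ⟨hTh, h0⟩)
      · push_neg at h0
        obtain ⟨φ, hφT, hφfin⟩ := h0
        refine Or.inr (Or.inr ⟨hTh, fun ψ hψT => ?_⟩)
        have hcψ : conj φ ψ ∈ T := (hconj T hTh φ ψ).mpr ⟨hφT, hψT⟩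
        have hinf := hall _ hcψ
        rw [setAt_union] at hinf
        have h1 : setAt 𝒯₀ (conj φ ψ) ⊆ setAt 𝒯₀ φ :=
          fun S hS => ⟨hS.1, ((hconj S (h𝒯₀ S hS.1) φ ψ).mp hS.2).1⟩
        have h2 : setAt 𝒯₁ (conj φ ψ) ⊆ setAt 𝒯₁ ψ :=
          fun S hS => ⟨hS.1, ((hconj S (h𝒯₁ S hS.1) φ ψ).mp hS.2).2⟩
        have hinf' := hinf.mono (Set.union_subset_union h1 h2)
        rcases Set.infinite_union.mp hinf' with h | h
        · exact absurd hφfin h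
        · exact h
  · rintro ((h | ⟨hTh, hall⟩) | (h | ⟨hTh, hall⟩))
    · exact Or.inl (Or.inl h)
    · exact Or.inr ⟨hTh, fun φ hφ => by
        rw [setAt_union]; exact ((hall φ hφ).mono Set.subset_union_left)⟩
    · exact Or.inl (Or.inr h)
    · exact Or.inr ⟨hTh, fun φ hφ => by
        rw [setAt_union]; exact ((hall φ hφ).mono Set.subset_union_right)⟩
end

section
/- The E-closure operator is idempotent: for any set 𝒯 of complete theories, Cl_E(Cl_E(𝒯)) = Cl_E(𝒯). -/
open Set

variable {Sentence : Type*}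

/-- The E-closure operator is idempotent. -/
theorem ClE_idem
    (conj : Sentence → Sentence → Sentence)
    (isTh : Set Sentence → Prop)
    (hne : ∀ T, isTh T → T.Nonempty)
    (hconj : ∀ T, isTh T → ∀ φ ψ : Sentence, conj φ ψ ∈ T ↔ φ ∈ T ∧ ψ ∈ T)
    (𝒯 : Set (Set Sentence)) (h𝒯 : ∀ T ∈ 𝒯, isTh T) :
    ClE isTh (ClE isTh 𝒯) = ClE isTh 𝒯 := by
  apply Set.Subset.antisymm
  · rintro T (hT | ⟨hTh, hinf⟩)
    · exact hT
    · right
      refine ⟨hTh, fun φ hφ => ?_⟩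
      by_contra hfin
      rw [Set.not_infinite] at hfin
      have hsub : setAt (ClE isTh 𝒯) φ ⊆ setAt 𝒯 φ := by
        rintro T' ⟨(hT' | ⟨_, hT'inf⟩), hφT'⟩
        · exact ⟨hT', hφT'⟩
        · exact absurd (hT'inf φ hφT') hfin.not_infinite
      exact (hinf φ hφ).mono hsub hfin
  · exact Set.subset_union_left
end

section
/- If 𝒯'₀ is a generating set for an E-closed set 𝒯₀ (i.e., Cl_E(𝒯'₀) = 𝒯₀) and every theory T ∈ 𝒯'₀ is isolated in 𝒯'₀, meaning there is a sentence φ ∈ T with (𝒯'₀)_φ = {T}, then 𝒯'₀ is a minimal generating set: no proper subset of 𝒯'₀ generates 𝒯₀. -/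
open Set

variable {Sentence : Type*}

/-- If every theory of a generating set `𝒯'₀` for an E-closed set `𝒯₀` is
isolated in `𝒯'₀`, then `𝒯'₀` is a minimal generating set. -/
theorem minimal_of_isolated
    (conj : Sentence → Sentence → Sentence)
    (isTh : Set Sentence → Prop)
    (hne : ∀ T, isTh T → T.Nonempty)
    (hconj : ∀ T, isTh T → ∀ φ ψ : Sentence, conj φ ψ ∈ T ↔ φ ∈ T ∧ ψ ∈ T)
    (𝒯₀ 𝒯'₀ : Set (Set Sentence)) (h𝒯₀ : ∀ T ∈ 𝒯₀, isTh T)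
    (hclosed : ClE isTh 𝒯₀ = 𝒯₀)
    (hsub : 𝒯'₀ ⊆ 𝒯₀) (hgen : ClE isTh 𝒯'₀ = 𝒯₀)
    (hiso : ∀ T ∈ 𝒯'₀, ∃ φ ∈ T, setAt 𝒯'₀ φ = {T}) :
    ∀ 𝒮 : Set (Set Sentence), 𝒮 ⊂ 𝒯'₀ → ClE isTh 𝒮 ≠ 𝒯₀ := by
  intro 𝒮 hss hcl
  obtain ⟨hsub', hne'⟩ := hss
  obtain ⟨T, hT, hTnS⟩ := Set.not_subset.mp hne'
  have hT𝒯₀ : T ∈ 𝒯₀ := hsub hT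
  rw [← hcl] at hT𝒯₀
  rcases hT𝒯₀ with h | ⟨_, h⟩
  · exact hTnS h
  · obtain ⟨φ, hφT, hφiso⟩ := hiso T hT
    have hsubset : setAt 𝒮 φ ⊆ setAt 𝒯'₀ φ := fun S ⟨hS, hφS⟩ => ⟨hsub' hS, hφS⟩
    have : (setAt 𝒮 φ).Finite := (Set.finite_singleton T).subset (hφiso ▸ hsubset)
    exact h φ hφT this
end

section
/- If 𝒯'₀ is a minimal generating set for an E-closed set 𝒯₀ and 𝒯'₀ is infinite, then every theory T ∈ 𝒯'₀ is isolated in 𝒯'₀: there exists a sentence φ ∈ T such that (𝒯'₀)_φ = {T}. -/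
open Set

variable {Sentence : Type*}

/-- If `𝒯'₀` is an infinite minimal generating set for an E-closed set `𝒯₀`,
then every theory of `𝒯'₀` is isolated in `𝒯'₀` by some sentence. -/
theorem isolated_of_minimal
    (conj : Sentence → Sentence → Sentence) (neg : Sentence → Sentence)
    (isTh : Set Sentence → Prop)
    (hne : ∀ T, isTh T → T.Nonempty)
    (hconj : ∀ T, isTh T → ∀ φ ψ : Sentence, conj φ ψ ∈ T ↔ φ ∈ T ∧ ψ ∈ T)
    (hcomp : ∀ T, isTh T → ∀ φ : Sentence, φ ∈ T ↔ neg φ ∉ T)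
    (𝒯₀ 𝒯'₀ : Set (Set Sentence)) (h𝒯₀ : ∀ T ∈ 𝒯₀, isTh T)
    (hclosed : ClE isTh 𝒯₀ = 𝒯₀)
    (hsub : 𝒯'₀ ⊆ 𝒯₀) (hgen : ClE isTh 𝒯'₀ = 𝒯₀)
    (hmin : ∀ 𝒮 : Set (Set Sentence), 𝒮 ⊂ 𝒯'₀ → ClE isTh 𝒮 ≠ 𝒯₀)
    (hinf : 𝒯'₀.Infinite) :
    ∀ T ∈ 𝒯'₀, ∃ φ ∈ T, setAt 𝒯'₀ φ = {T} := by
  intro T hT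
  classical
  have hTth : isTh T := h𝒯₀ T (hsub hT)
  set 𝒮 : Set (Set Sentence) := 𝒯'₀ \ {T} with h𝒮
  have hsat : ∀ φ, setAt 𝒮 φ = setAt 𝒯'₀ φ \ {T} := by
    intro φ; ext S
    simp only [setAt, h𝒮, mem_setOf_eq, mem_diff, mem_singleton_iff]
    tauto
  have hclE : ClE isTh 𝒮 ⊆ 𝒯₀ := by
    intro S hS
    rcases hS with hS | ⟨hSth, hSlim⟩
    · exact hsub hS.1
    · rw [← hgen]
      right
      refine ⟨hSth, fun φ hφ => (hSlim φ hφ).mono ?_⟩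
      rw [hsat]; exact diff_subset
  have hssub : 𝒮 ⊂ 𝒯'₀ := by
    constructor
    · exact diff_subset
    · intro h
      exact (h hT).2 rfl
  have hne' : (𝒯₀ \ ClE isTh 𝒮).Nonempty := by
    rw [diff_nonempty]
    intro h
    exact hmin 𝒮 hssub (le_antisymm hclE h)
  obtain ⟨T', hT'0, hT'n⟩ := hne'
  have hT'T : T' = T := by
    have : T' ∈ ClE isTh 𝒯'₀ := by rw [hgen]; exact hT'0
    rcases this with h | ⟨hth, hlim⟩
    · by_contra hne2
      exact hT'n (Or.inl ⟨h, hne2⟩)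
    · exfalso
      apply hT'n
      right
      refine ⟨hth, fun φ hφ => ?_⟩
      rw [hsat]
      exact (hlim φ hφ).diff (finite_singleton T)
  rw [hT'T] at hT'n
  have hTnotlim : ¬ ∀ φ ∈ T, (setAt 𝒮 φ).Infinite := by
    intro h
    exact hT'n (Or.inr ⟨hTth, h⟩)
  push_neg at hTnotlim
  obtain ⟨φ₀, hφ₀T, hφ₀fin⟩ := hTnotlim
  rw [hsat] at hφ₀fin
  -- hφ₀fin : (setAt 𝒯'₀ φ₀ \ {T}).Finite
  -- separation lemma
  have claim : ∀ s : Finset (Set Sentence), (∀ T' ∈ s, isTh T' ∧ T' ≠ T) →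
      ∃ φ, φ ∈ T ∧ (∀ T' ∈ s, φ ∉ T') ∧ ∀ S, isTh S → φ ∈ S → φ₀ ∈ S := by
    intro s
    induction s using Finset.induction_on with
    | empty => exact fun _ => ⟨φ₀, hφ₀T, by simp, fun S _ h => h⟩
    | @insert a s ha ih =>
      intro hins
      obtain ⟨φ, hφT, hφnot, hφimp⟩ := ih (fun T' h => hins T' (Finset.mem_insert_of_mem h))
      obtain ⟨hath, haneT⟩ := hins a (Finset.mem_insert_self a s)
      have : ∃ ψ, ψ ∈ T ∧ ψ ∉ a := by
        by_cases hTa : T ⊆ a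
        · have : ¬ a ⊆ T := fun h => haneT.symm (le_antisymm hTa h)
          obtain ⟨x, hxa, hxT⟩ := not_subset.mp this
          refine ⟨neg x, ?_, ?_⟩
          · by_contra h
            exact hxT ((hcomp T hTth x).mpr h)
          · exact fun h => ((hcomp a hath x).mp hxa) h
        · obtain ⟨ψ, hψT, hψa⟩ := not_subset.mp hTa
          exact ⟨ψ, hψT, hψa⟩
      obtain ⟨ψ, hψT, hψa⟩ := this
      refine ⟨conj φ ψ, (hconj T hTth φ ψ).mpr ⟨hφT, hψT⟩, ?_, ?_⟩
      · intro T' hT' hmem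
        rcases Finset.mem_insert.mp hT' with rfl | hT's
        · exact hψa ((hconj T' hath φ ψ).mp hmem).2
        · exact hφnot T' hT's ((hconj T' (hins T' (Finset.mem_insert_of_mem hT's)).1 φ ψ).mp hmem).1
      · intro S hSth hmem
        exact hφimp S hSth ((hconj S hSth φ ψ).mp hmem).1
  obtain ⟨φ, hφT, hφnot, hφimp⟩ := claim hφ₀fin.toFinset (by
    intro T' hT'
    rw [Set.Finite.mem_toFinset] at hT'
    obtain ⟨⟨hT'mem, _⟩, hT'ne⟩ := hT'
    exact ⟨h𝒯₀ T' (hsub hT'mem), hT'ne⟩)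
  refine ⟨φ, hφT, ?_⟩
  ext S
  simp only [setAt, mem_setOf_eq, mem_singleton_iff]
  constructor
  · rintro ⟨hS𝒯, hφS⟩
    by_contra hSne
    have hSth : isTh S := h𝒯₀ S (hsub hS𝒯)
    have hSmem : S ∈ hφ₀fin.toFinset := by
      rw [Set.Finite.mem_toFinset]
      exact ⟨⟨hS𝒯, hφimp S hSth hφS⟩, hSne⟩
    exact hφnot S hSmem hφS
  · rintro rfl
    exact ⟨hT, hφT⟩
end

section
/- If 𝒯'₀ is a generating set for an E-closed set 𝒯₀ and every T ∈ 𝒯'₀ is isolated by a set (𝒯'₀)_φ (i.e., (𝒯'₀)_φ = {T} for some φ ∈ T), then every T ∈ 𝒯'₀ is in fact isolated by a set (𝒯₀)_φ, i.e., there is ψ ∈ T with (𝒯₀)_ψ = {T}. -/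
open Set

variable {Sentence : Type*}

/-- If every theory of a generating set `𝒯'₀` for an E-closed set `𝒯₀` is
isolated by a set `(𝒯'₀)_φ`, then it is isolated by a set `(𝒯₀)_ψ`. -/
theorem isolated_in_closure
    (conj : Sentence → Sentence → Sentence)
    (isTh : Set Sentence → Prop)
    (hne : ∀ T, isTh T → T.Nonempty)
    (hconj : ∀ T, isTh T → ∀ φ ψ : Sentence, conj φ ψ ∈ T ↔ φ ∈ T ∧ ψ ∈ T)
    (𝒯₀ 𝒯'₀ : Set (Set Sentence)) (h𝒯₀ : ∀ T ∈ 𝒯₀, isTh T)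
    (hclosed : ClE isTh 𝒯₀ = 𝒯₀)
    (hsub : 𝒯'₀ ⊆ 𝒯₀) (hgen : ClE isTh 𝒯'₀ = 𝒯₀)
    (hiso : ∀ T ∈ 𝒯'₀, ∃ φ ∈ T, setAt 𝒯'₀ φ = {T}) :
    ∀ T ∈ 𝒯'₀, ∃ ψ ∈ T, setAt 𝒯₀ ψ = {T} := by
  intro T hT
  obtain ⟨φ, hφT, hφ⟩ := hiso T hT
  refine ⟨φ, hφT, ?_⟩
  ext S
  constructor
  · rintro ⟨hS𝒯₀, hφS⟩
    rw [← hgen] at hS𝒯₀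
    rcases hS𝒯₀ with hS | ⟨_, hinf⟩
    · have : S ∈ setAt 𝒯'₀ φ := ⟨hS, hφS⟩
      rwa [hφ] at this
    · exact absurd (hφ ▸ hinf φ hφS) (by simp [Set.not_infinite])
  · rintro rfl
    exact ⟨hsub hT, hφT⟩
end

section
/- A minimal generating set for an E-closed set is least: if 𝒯'₀ and 𝒯''₀ are both generating sets for an E-closed set 𝒯₀ and 𝒯'₀ is minimal (contains no proper generating subset), then 𝒯'₀ ⊆ 𝒯''₀. -/
open Set

variable {Sentence : Type*}

lemma setAt_mono {A B : Set (Set Sentence)}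
    (h : A ⊆ B) (φ : Sentence) : setAt A φ ⊆ setAt B φ := by
  intro S hS; exact ⟨h hS.1, hS.2⟩

/-- A minimal generating set for an E-closed set is least: it is contained in
every generating set. -/
theorem least_of_minimal
    (conj : Sentence → Sentence → Sentence) (neg : Sentence → Sentence)
    (isTh : Set Sentence → Prop)
    (hne : ∀ T, isTh T → T.Nonempty)
    (hconj : ∀ T, isTh T → ∀ φ ψ : Sentence, conj φ ψ ∈ T ↔ φ ∈ T ∧ ψ ∈ T)
    (hcomp : ∀ T, isTh T → ∀ φ : Sentence, φ ∈ T ↔ neg φ ∉ T)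
    (hsep : ∀ T₀ T₁ : Set Sentence, isTh T₀ → isTh T₁ → T₀ ≠ T₁ →
      ∃ φ : Sentence, φ ∈ T₀ ∧ φ ∉ T₁)
    (𝒯₀ 𝒯'₀ 𝒯''₀ : Set (Set Sentence)) (h𝒯₀ : ∀ T ∈ 𝒯₀, isTh T)
    (hclosed : ClE isTh 𝒯₀ = 𝒯₀)
    (hsub' : 𝒯'₀ ⊆ 𝒯₀) (hgen' : ClE isTh 𝒯'₀ = 𝒯₀)
    (hsub'' : 𝒯''₀ ⊆ 𝒯₀) (hgen'' : ClE isTh 𝒯''₀ = 𝒯₀)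
    (hmin : ∀ 𝒮 : Set (Set Sentence), 𝒮 ⊂ 𝒯'₀ → ClE isTh 𝒮 ≠ 𝒯₀) :
    𝒯'₀ ⊆ 𝒯''₀ := by
  intro T hT
  by_contra hT''
  -- Key lemma: if setAt 𝒯''₀ φ is infinite then setAt 𝒯'₀ φ is infinite.
  have key : ∀ φ : Sentence, (setAt 𝒯''₀ φ).Infinite → (setAt 𝒯'₀ φ).Infinite := by
    intro φ hinf
    by_cases hex : ∃ S ∈ setAt 𝒯''₀ φ, S ∉ 𝒯'₀
    · obtain ⟨S, hS, hSnot⟩ := hex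
      have hS𝒯₀ : S ∈ 𝒯₀ := hsub'' hS.1
      rw [← hgen'] at hS𝒯₀
      rcases hS𝒯₀ with h | h
      · exact absurd h hSnot
      · exact h.2 φ hS.2
    · push_neg at hex
      refine hinf.mono ?_
      intro S hS
      exact ⟨hex S hS, hS.2⟩
  -- T is a limit point of 𝒯''₀.
  have hT𝒯₀ : T ∈ 𝒯₀ := hsub' hT
  have hTlim : ∀ φ ∈ T, (setAt 𝒯''₀ φ).Infinite := by
    have := hT𝒯₀
    rw [← hgen''] at this
    rcases this with h | h
    · exact absurd h hT''
    · exact h.2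
  -- The diminished set still generates 𝒯₀, contradiction with minimality.
  have hssub : 𝒯'₀ \ {T} ⊂ 𝒯'₀ := by
    constructor
    · exact diff_subset
    · intro h
      exact (h hT).2 rfl
  apply hmin (𝒯'₀ \ {T}) hssub
  have hdiff : ∀ φ : Sentence, (setAt 𝒯'₀ φ).Infinite → (setAt (𝒯'₀ \ {T}) φ).Infinite := by
    intro φ h
    have : setAt 𝒯'₀ φ \ {T} ⊆ setAt (𝒯'₀ \ {T}) φ := by
      intro S hS
      exact ⟨⟨hS.1.1, hS.2⟩, hS.1.2⟩
    exact ((h.diff (finite_singleton T))).mono this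
  apply Set.Subset.antisymm
  · -- ClE (𝒯'₀ \ {T}) ⊆ 𝒯₀
    intro S hS
    rcases hS with h | h
    · exact hsub' h.1
    · rw [← hgen']
      exact Or.inr ⟨h.1, fun φ hφ => (h.2 φ hφ).mono (setAt_mono diff_subset φ)⟩
  · -- 𝒯₀ ⊆ ClE (𝒯'₀ \ {T})
    intro S hS
    have hS' := hS
    rw [← hgen'] at hS'
    rcases hS' with h | h
    · by_cases hST : S = T
      · subst hST
        exact Or.inr ⟨h𝒯₀ S hS, fun φ hφ => hdiff φ (key φ (hTlim φ hφ))⟩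
      · exact Or.inl ⟨h, hST⟩
    · exact Or.inr ⟨h.1, fun φ hφ => hdiff φ (h.2 φ hφ)⟩
end

section
/- Relative version of the least-generating-set criterion: let 𝒯 be an E-closed set and let 𝒯'₀ be a 𝒯-relatively generating set for an E-closed set 𝒯₀ (i.e., Cl_E(𝒯'₀) \ 𝒯 = 𝒯₀ \ 𝒯). If every theory T ∈ 𝒯'₀ \ 𝒯 is isolated by some set (𝒯'₀ ∪ 𝒯)_φ (i.e., (𝒯'₀ ∪ 𝒯)_φ = {T} for some φ ∈ T), then 𝒯'₀ is 𝒯-minimal: for no T ∈ 𝒯'₀ \ 𝒯 does (𝒯'₀ \ {T}) together with 𝒯'₀ ∩ 𝒯 remain 𝒯-relatively generating for 𝒯₀. -/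
open Set

variable {Sentence : Type*}

/-- Relative version: if every theory of `𝒯'₀ \ 𝒯` is isolated by a set
`(𝒯'₀ ∪ 𝒯)_φ`, then `𝒯'₀` is `𝒯`-minimal: removing any `T ∈ 𝒯'₀ \ 𝒯`
destroys the `𝒯`-relative generation of `𝒯₀`. -/
theorem rel_minimal_of_isolated
    (conj : Sentence → Sentence → Sentence)
    (isTh : Set Sentence → Prop)
    (hne : ∀ T, isTh T → T.Nonempty)
    (hconj : ∀ T, isTh T → ∀ φ ψ : Sentence, conj φ ψ ∈ T ↔ φ ∈ T ∧ ψ ∈ T)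
    (𝒯 𝒯₀ 𝒯'₀ : Set (Set Sentence))
    (h𝒯 : ∀ T ∈ 𝒯, isTh T) (h𝒯₀ : ∀ T ∈ 𝒯₀, isTh T)
    (hTclosed : ClE isTh 𝒯 = 𝒯) (h𝒯₀closed : ClE isTh 𝒯₀ = 𝒯₀)
    (hsub : 𝒯'₀ ⊆ 𝒯₀)
    (hrelgen : ClE isTh 𝒯'₀ \ 𝒯 = 𝒯₀ \ 𝒯)
    (hiso : ∀ T ∈ 𝒯'₀ \ 𝒯, ∃ φ ∈ T, setAt (𝒯'₀ ∪ 𝒯) φ = {T}) :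
    ∀ T ∈ 𝒯'₀ \ 𝒯,
      ¬ (ClE isTh ((𝒯'₀ \ {T}) ∪ (𝒯'₀ ∩ 𝒯)) \ 𝒯 = 𝒯₀ \ 𝒯) := by
  intro T hT hcon
  obtain ⟨φ, hφT, hisoφ⟩ := hiso T hT
  have hT0 : T ∈ 𝒯₀ \ 𝒯 := ⟨hsub hT.1, hT.2⟩
  rw [← hcon] at hT0
  rcases hT0.1 with h | h
  · rcases h with h | h
    · exact h.2 rfl
    · exact hT.2 h.2
  · have hinf := h.2 φ hφT
    apply hinf
    apply Set.Finite.subset (Set.finite_singleton T)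
    rw [← hisoφ]
    rintro S ⟨hS, hSφ⟩
    refine ⟨?_, hSφ⟩
    rcases hS with h' | h'
    · exact Or.inl h'.1
    · exact Or.inl h'.1
end

section
/- Perfect-set dichotomy for relative closures: if 𝒯'₁ is a countable set of theories in a countable language none of which is isolated (for every T ∈ 𝒯'₁ and every φ ∈ T, (𝒯'₁)_φ is infinite), and 𝒯'₁ is nonempty, then |Cl_E(𝒯'₁)| ≥ 2^ℵ₀. -/
open Set

variable {Sentence : Type*}

/-- Perfect-set dichotomy: a nonempty countable family of theories over a
countable language with no isolated points has E-closure of size at least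
continuum. -/
theorem perfect_set_closure
    [Countable Sentence]
    (conj : Sentence → Sentence → Sentence) (neg : Sentence → Sentence)
    (isTh : Set Sentence → Prop)
    (hne : ∀ T, isTh T → T.Nonempty)
    (hconj : ∀ T, isTh T → ∀ φ ψ : Sentence, conj φ ψ ∈ T ↔ φ ∈ T ∧ ψ ∈ T)
    (hcomp : ∀ T, isTh T → ∀ φ : Sentence, φ ∈ T ↔ neg φ ∉ T)
    (𝒯'₁ : Set (Set Sentence)) (h𝒯'₁ : ∀ T ∈ 𝒯'₁, isTh T)
    (hcompact : ∀ f : ℕ → Sentence,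
      (∀ n, (setAt 𝒯'₁ (f n)).Infinite) →
      (∀ n, ∀ T : Set Sentence, isTh T → f (n + 1) ∈ T → f n ∈ T) →
      ∃ T ∈ ClE isTh 𝒯'₁, ∀ n, f n ∈ T)
    (hcount : 𝒯'₁.Countable) (hnonempty : 𝒯'₁.Nonempty)
    (hnoniso : ∀ T ∈ 𝒯'₁, ∀ φ ∈ T, (setAt 𝒯'₁ φ).Infinite) :
    Cardinal.continuum ≤ Cardinal.mk ↥(ClE isTh 𝒯'₁) := by
  classical
  -- a base sentence with infinite support
  obtain ⟨T₀, hT₀⟩ := hnonempty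
  obtain ⟨φ₀, hφ₀⟩ := hne T₀ (h𝒯'₁ T₀ hT₀)
  have hinf₀ : (setAt 𝒯'₁ φ₀).Infinite := hnoniso T₀ hT₀ φ₀ hφ₀
  -- splitting lemma
  have split : ∀ φ : Sentence, (setAt 𝒯'₁ φ).Infinite →
      ∃ ψ, (setAt 𝒯'₁ (conj φ ψ)).Infinite ∧ (setAt 𝒯'₁ (conj φ (neg ψ))).Infinite := by
    intro φ hφ
    obtain ⟨T₁, hT₁, T₂, hT₂, hTne⟩ := hφ.nontrivial
    obtain ⟨hT₁m, hφT₁⟩ := hT₁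
    obtain ⟨hT₂m, hφT₂⟩ := hT₂
    have th₁ := h𝒯'₁ T₁ hT₁m
    have th₂ := h𝒯'₁ T₂ hT₂m
    have : ∃ χ, χ ∈ T₁ ∧ χ ∉ T₂ := by
      by_contra h
      push_neg at h
      have hsub : ¬ T₂ ⊆ T₁ := fun hsub => hTne (Set.Subset.antisymm h hsub)
      obtain ⟨χ, hχ₂, hχ₁⟩ := Set.not_subset.mp hsub
      have h1 : neg χ ∈ T₁ := by
        by_contra hn; exact hχ₁ ((hcomp T₁ th₁ χ).mpr hn)
      have h2 : neg χ ∉ T₂ := fun hn => (hcomp T₂ th₂ χ).mp hχ₂ hn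
      exact h2 (h (neg χ) h1)
    obtain ⟨ψ, hψ₁, hψ₂⟩ := this
    have hnψ : neg ψ ∈ T₂ := by
      by_contra hn; exact hψ₂ ((hcomp T₂ th₂ ψ).mpr hn)
    refine ⟨ψ, ?_, ?_⟩
    · exact hnoniso T₁ hT₁m _ ((hconj T₁ th₁ φ ψ).mpr ⟨hφT₁, hψ₁⟩)
    · exact hnoniso T₂ hT₂m _ ((hconj T₂ th₂ φ (neg ψ)).mpr ⟨hφT₂, hnψ⟩)
  choose! ψfun hψ1 hψ2 using split
  -- the binary tree of sentences (lists grow at the head)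
  set step : Bool → Sentence → Sentence :=
    fun b φ => if b then conj φ (ψfun φ) else conj φ (neg (ψfun φ)) with hstep
  set node : List Bool → Sentence := fun δ => δ.foldr step φ₀ with hnode
  have node_nil : node [] = φ₀ := rfl
  have node_cons : ∀ b δ, node (b :: δ) = step b (node δ) := fun _ _ => rfl
  have hinf : ∀ δ, (setAt 𝒯'₁ (node δ)).Infinite := by
    intro δ
    induction δ with
    | nil => exact hinf₀
    | cons b δ ih =>
      rw [node_cons]
      cases b with
      | true => simpa [hstep] using hψ1 (node δ) ih
      | false => simpa [hstep] using hψ2 (node δ) ih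
  have hdown : ∀ b δ T, isTh T → node (b :: δ) ∈ T → node δ ∈ T := by
    intro b δ T hT h
    rw [node_cons] at h
    cases b with
    | true => exact ((hconj T hT _ _).mp h).1
    | false => exact ((hconj T hT _ _).mp h).1
  have hincompat : ∀ δ T, isTh T →
      node (true :: δ) ∈ T → node (false :: δ) ∈ T → False := by
    intro δ T hT h1 h2
    rw [node_cons] at h1 h2
    simp only [hstep, if_pos, if_neg] at h1 h2
    have hψT : ψfun (node δ) ∈ T := ((hconj T hT _ _).mp h1).2
    have hnψT : neg (ψfun (node δ)) ∈ T := ((hconj T hT _ _).mp h2).2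
    exact (hcomp T hT (ψfun (node δ))).mp hψT hnψT
  -- branches
  set branch : (ℕ → Bool) → ℕ → List Bool :=
    fun x n => Nat.rec [] (fun m ih => x m :: ih) n with hbranch
  have branch_succ : ∀ x n, branch x (n + 1) = x n :: branch x n := fun _ _ => rfl
  -- for every branch, a theory in the closure containing the branch
  have key : ∀ x : ℕ → Bool, ∃ T ∈ ClE isTh 𝒯'₁, ∀ n, node (branch x n) ∈ T := by
    intro x
    refine hcompact (fun n => node (branch x n)) (fun n => hinf _) ?_
    intro n T hT h
    exact hdown (x n) (branch x n) T hT h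
  choose g hg1 hg2 using key
  have gth : ∀ x, isTh (g x) := by
    intro x
    rcases hg1 x with h | h
    · exact h𝒯'₁ _ h
    · exact h.1
  have hbr_eq : ∀ (x y : ℕ → Bool) m, (∀ k, k < m → x k = y k) →
      branch x m = branch y m := by
    intro x y m
    induction m with
    | zero => intro _; rfl
    | succ k ih =>
      intro h
      rw [branch_succ, branch_succ, h k (Nat.lt_succ_self k),
        ih (fun j hj => h j (hj.trans (Nat.lt_succ_self k)))]
  -- injectivity
  have hginj : Function.Injective g := by
    intro x y hxy
    by_contra hne'
    have hdiff : ∃ n, x n ≠ y n := by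
      by_contra h
      push_neg at h
      exact hne' (funext h)
    set n := Nat.find hdiff with hndef
    have hn : x n ≠ y n := Nat.find_spec hdiff
    have hbr : branch x n = branch y n :=
      hbr_eq x y n (fun k hk => not_not.mp (Nat.find_min hdiff hk))
    have hx : node (x n :: branch x n) ∈ g x := by
      have := hg2 x (n + 1); rwa [branch_succ] at this
    have hy : node (y n :: branch x n) ∈ g x := by
      have := hg2 y (n + 1)
      rw [show branch y (n + 1) = y n :: branch y n from rfl, ← hbr, ← hxy] at this
      exact this
    cases hxn : x n with
    | true =>
      have hyn : y n = false := by
        cases hyn : y n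
        · rfl
        · exact absurd (hxn.trans hyn.symm) hn
      rw [hxn] at hx; rw [hyn] at hy
      exact hincompat _ _ (gth x) hx hy
    | false =>
      have hyn : y n = true := by
        cases hyn : y n
        · exact absurd (hxn.trans hyn.symm) hn
        · rfl
      rw [hxn] at hx; rw [hyn] at hy
      exact hincompat _ _ (gth x) hy hx
  -- conclude
  have hinj2 : Function.Injective
      (fun x : ℕ → Bool => (⟨g x, hg1 x⟩ : ↥(ClE isTh 𝒯'₁))) := by
    intro x y h
    exact hginj (congrArg Subtype.val h)
  have := Cardinal.lift_mk_le'.mpr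
    ⟨⟨fun x : ℕ → Bool => (⟨g x, hg1 x⟩ : ↥(ClE isTh 𝒯'₁)), hinj2⟩⟩
  have hmk : Cardinal.mk (ℕ → Bool) = Cardinal.continuum := by
    rw [Cardinal.mk_arrow, Cardinal.mk_bool, Cardinal.mk_nat, Cardinal.lift_aleph0,
      Cardinal.lift_two, Cardinal.continuum]
  rw [hmk, Cardinal.lift_continuum] at this
  simpa using this
end
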